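/- arXiv:1005.1004 — 4 statements merged into one kernel-verified Lean document; each statement's English description precedes it below -/
import Mathlib

section
/- Let S be a monoid and suppose that for all s, t ∈ S, the set r(s,t) is either empty or finitely generated as a right ideal of S. Then the class of left S-acts satisfying Condition (E) is closed under ultraproducts: for every set ι, every ultrafilter φ on ι and every family (B_i)_{i∈ι} of left S-acts each satisfying Condition (E), the ultraproduct of the family (B_i) with respect to φ satisfies Condition (E). -/
universe u v w

open Filter

/-- Condition (E) for a left `S`-act `A`. -/
def CondE (S : Type*) [Monoid S] (A : Type*) [MulAction S A] : Prop :=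
  ∀ (s t : S) (a : A), s • a = t • a →
    ∃ (c : A) (u : S), a = u • c ∧ s * u = t * u

/-- `r(s,t) = {u | s*u = t*u}`. -/
def rset (S : Type*) [Monoid S] (s t : S) : Set S :=
  {u | s * u = t * u}

/-- A subset of `S` is finitely generated as a right ideal of `S`. -/
def FGideal (S : Type*) [Monoid S] (I : Set S) : Prop :=
  ∃ F : Finset S, ↑F ⊆ I ∧ ∀ x ∈ I, ∃ p ∈ F, ∃ w : S, x = p * w

/-- Coordinatewise `S`-action on a filter product of `S`-acts. -/
instance Filter.Product.instSMul {S : Type*} {ι : Type*} {l : Filter ι} {A : ι → Type*}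
    [∀ i, SMul S (A i)] : SMul S (l.Product A) where
  smul s := Quotient.map' (fun f i => s • f i)
    (fun f g h => h.mono fun i hi => by dsimp only; rw [hi])

instance Filter.Product.instMulAction {S : Type*} [Monoid S] {ι : Type*} {l : Filter ι}
    {A : ι → Type*} [∀ i, MulAction S (A i)] : MulAction S (l.Product A) where
  one_smul x := Quotient.inductionOn' x fun f => Quotient.sound' <|
    Filter.Eventually.of_forall fun i => one_smul S (f i)
  mul_smul s t x := Quotient.inductionOn' x fun f => Quotient.sound' <|
    Filter.Eventually.of_forall fun i => mul_smul s t (f i)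

theorem condE_closed_under_ultraproducts (S : Type u) [Monoid S]
    (h : ∀ s t : S, rset S s t = ∅ ∨ FGideal S (rset S s t)) :
    ∀ (ι : Type v) (φ : Ultrafilter ι) (B : ι → Type w) [∀ i, MulAction S (B i)],
      (∀ i, CondE S (B i)) → CondE S ((↑φ : Filter ι).Product B) := by
  classical
  intro ι φ B _ hB s t a hst
  induction a using Quotient.inductionOn' with
  | h f =>
  have hst' : ∀ᶠ i in (↑φ : Filter ι), s • f i = t • f i := Quotient.exact' hst
  choose! c u hc hu using fun i (hi : s • f i = t • f i) => hB i s t (f i) hi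
  obtain ⟨i0, hi0⟩ := hst'.exists
  have hfg : FGideal S (rset S s t) := by
    rcases h s t with h0 | hfg
    · exact absurd (h0 ▸ hu i0 hi0 : u i0 ∈ (∅ : Set S)) (Set.notMem_empty _)
    · exact hfg
  obtain ⟨F, hF, hgen⟩ := hfg
  choose! p hp w hw using fun i (hi : s • f i = t • f i) => hgen (u i) (hu i hi)
  have hUnion : (⋃ q ∈ (↑F : Set S), {i | s • f i = t • f i ∧ p i = q}) ∈ φ := by
    refine Filter.mem_of_superset hst' fun i hi => ?_
    exact Set.mem_biUnion (hp i hi) ⟨hi, rfl⟩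
  obtain ⟨q, hqF, hq⟩ := (Ultrafilter.finite_biUnion_mem_iff F.finite_toSet).mp hUnion
  refine ⟨Quotient.mk'' (fun i => if hi : s • f i = t • f i then w i • c i hi else f i), q, ?_, hF hqF⟩
  · apply Quotient.sound'
    refine Filter.mem_of_superset hq fun i hi => ?_
    obtain ⟨hi1, hi2⟩ := hi
    show f i = q • (if hi : s • f i = t • f i then w i • c i hi else f i)
    rw [dif_pos hi1, ← mul_smul, ← hi2, ← hw i hi1, ← hc i hi1]
end

section
/- Let S be a monoid. The following are equivalent: (a) the class of left S-acts satisfying Condition (EP) is closed under ultraproducts, i.e. for every set ι, every ultrafilter φ on ι and every family (A_i)_{i∈ι} of left S-acts each satisfying Condition (EP), the ultraproduct satisfies Condition (EP); (b) for all s, t ∈ S, either s•a ≠ t•a for every left S-act A satisfying Condition (EP) and every a ∈ A, or there exists a finite subset f ⊆ R(s,t) such that for every left S-act A satisfying Condition (EP) and every a ∈ A with s•a = t•a, there exist (u,v) ∈ f and c ∈ A with a = u•c and a = v•c. -/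
universe u

open Filter

/-- Condition (EP) for a left `S`-act `A`. -/
def CondEP (S : Type*) [Monoid S] (A : Type*) [MulAction S A] : Prop :=
  ∀ (s t : S) (a : A), s • a = t • a →
    ∃ (c : A) (u v : S), a = u • c ∧ a = v • c ∧ s * u = t * v

/-- `R(s,t) = {(u,v) | s*u = t*v}`. -/
def Rset (S : Type*) [Monoid S] (s t : S) : Set (S × S) :=
  {p | s * p.1 = t * p.2}

theorem condEP_ultraproducts_iff (S : Type u) [Monoid S] :
    (∀ (ι : Type u) (φ : Ultrafilter ι) (A : ι → Type u) [∀ i, MulAction S (A i)],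
        (∀ i, CondEP S (A i)) → CondEP S ((↑φ : Filter ι).Product A)) ↔
      ∀ s t : S,
        (∀ (A : Type u) [MulAction S A], CondEP S A → ∀ a : A, s • a ≠ t • a) ∨
        ∃ F : Finset (S × S), ↑F ⊆ Rset S s t ∧
          ∀ (A : Type u) [MulAction S A], CondEP S A → ∀ a : A, s • a = t • a →
            ∃ p ∈ F, ∃ c : A, a = p.1 • c ∧ a = p.2 • c := by
  classical
  constructor
  · intro hUP s t
    by_contra hcon
    push_neg at hcon
    obtain ⟨-, h2⟩ := hcon
    -- index type: finite subsets of R(s,t)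
    set ι := Finset ↥(Rset S s t) with hι
    have key : ∀ G : ι, ∃ (A : Type u) (_ : MulAction S A), CondEP S A ∧
        ∃ a : A, s • a = t • a ∧
          ∀ p ∈ G.image (fun q : ↥(Rset S s t) => (q : S × S)),
            ∀ c : A, ¬(a = p.1 • c ∧ a = p.2 • c) := by
      intro G
      have hsub : ↑(G.image (fun q : ↥(Rset S s t) => (q : S × S))) ⊆ Rset S s t := by
        rw [Finset.coe_image]
        rintro p ⟨q, -, rfl⟩
        exact q.2
      have := h2 _ hsub
      obtain ⟨A, inst, hEP, a, ha, hno⟩ := this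
      exact ⟨A, inst, hEP, a, ha, fun p hp c hc => hno p hp c hc.1 hc.2⟩
    choose A inst hEP a ha hno using key
    letI : ∀ G : ι, MulAction S (A G) := inst
    have hne : (atTop : Filter ι).NeBot := atTop_neBot
    let φ : Ultrafilter ι := Ultrafilter.of atTop
    have hup : CondEP S ((↑φ : Filter ι).Product A) := hUP ι φ A hEP
    let x : (↑φ : Filter ι).Product A := Quotient.mk'' a
    have hsx : s • x = t • x := Quotient.sound' <| Eventually.of_forall fun G => ha G
    obtain ⟨c, u, v, hu, hv, huv⟩ := hup s t x hsx
    obtain ⟨g, rfl⟩ := Quotient.exists_rep c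
    have hu' : ∀ᶠ G in (↑φ : Filter ι), a G = u • g G := Quotient.eq''.mp hu
    have hv' : ∀ᶠ G in (↑φ : Filter ι), a G = v • g G := Quotient.eq''.mp hv
    have hmem : ∀ᶠ G in (↑φ : Filter ι), ({⟨(u, v), huv⟩} : ι) ⊆ G :=
      Ultrafilter.of_le atTop (Ici_mem_atTop _)
    obtain ⟨G, h1, h2', h3⟩ := (hu'.and (hv'.and hmem)).exists
    exact hno G (u, v)
      (Finset.mem_image.mpr ⟨⟨(u, v), huv⟩, h3 (Finset.mem_singleton_self _), rfl⟩)
      (g G) ⟨h1, h2'⟩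
  · intro h ι φ A _ hEP s t x hst
    obtain ⟨f, rfl⟩ := Quotient.exists_rep x
    have hst' : ∀ᶠ i in (↑φ : Filter ι), s • f i = t • f i := Quotient.eq''.mp hst
    rcases h s t with hL | ⟨F, hFsub, hF⟩
    · exfalso
      obtain ⟨i, hi⟩ := hst'.exists
      exact hL (A i) (hEP i) (f i) hi
    · have hall : ∀ᶠ i in (↑φ : Filter ι),
          ∃ p ∈ F, ∃ c : A i, f i = p.1 • c ∧ f i = p.2 • c :=
        hst'.mono fun i hi => hF (A i) (hEP i) (f i) hi
      have : {i | ∃ p ∈ F, ∃ c : A i, f i = p.1 • c ∧ f i = p.2 • c} ∈ φ := hall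
      have : (⋃ p ∈ (↑F : Set (S × S)),
          {i | ∃ c : A i, f i = p.1 • c ∧ f i = p.2 • c}) ∈ φ := by
        refine mem_of_superset this fun i hi => ?_
        obtain ⟨p, hp, hc⟩ := hi
        exact Set.mem_biUnion hp hc
      obtain ⟨p, hpF, hp⟩ := (Ultrafilter.finite_biUnion_mem_iff F.finite_toSet).mp this
      classical
      choose! cfun hc1 hc2 using fun i (hi : i ∈ {i | ∃ c : A i, f i = p.1 • c ∧ f i = p.2 • c}) => hi
      let g : ∀ i, A i := fun i => if hi : ∃ c : A i, f i = p.1 • c ∧ f i = p.2 • c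
        then cfun i hi else f i
      refine ⟨Quotient.mk'' g, p.1, p.2, ?_, ?_, hFsub hpF⟩
      · apply Quotient.sound'
        refine φ.toFilter.sets_of_superset hp fun i hi => ?_
        show f i = p.1 • g i
        simp only [Set.mem_setOf_eq] at hi
        simp only [g]
        rw [dif_pos hi]
        exact hc1 i hi
      · apply Quotient.sound'
        refine φ.toFilter.sets_of_superset hp fun i hi => ?_
        show f i = p.2 • g i
        simp only [Set.mem_setOf_eq] at hi
        simp only [g]
        rw [dif_pos hi]
        exact hc2 i hi
end

section
/- Let S be a monoid and suppose that for all s, t ∈ S, the set sS ∩ tS is either empty or finitely generated as a right ideal of S. Then the class of left S-acts satisfying Condition (W) is closed under ultraproducts: for every set ι, every ultrafilter φ on ι and every family (B_i)_{i∈ι} of left S-acts each satisfying Condition (W), the ultraproduct of the family (B_i) with respect to φ satisfies Condition (W). -/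
universe u v w

open Filter

/-- Condition (W) for a left `S`-act `A`. -/
def CondW (S : Type*) [Monoid S] (A : Type*) [MulAction S A] : Prop :=
  ∀ (s t : S) (a b : A), s • a = t • b →
    ∃ (c : A) (u : S), (∃ s' t' : S, u = s * s' ∧ u = t * t') ∧ s • a = u • c

/-- The right ideal `sS ∩ tS`. -/
def interIdeal (S : Type*) [Monoid S] (s t : S) : Set S :=
  {x | ∃ s' t' : S, x = s * s' ∧ x = t * t'}

/-- In an ultrafilter, an eventual existential over a finite set can be uniformized. -/
lemma ultra_finset_choice {ι : Type*} (φ : Ultrafilter ι) {α : Type*} (F : Finset α)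
    (Q : α → ι → Prop) (hev : ∀ᶠ i in (φ : Filter ι), ∃ p ∈ F, Q p i) :
    ∃ p ∈ F, ∀ᶠ i in (φ : Filter ι), Q p i := by
  classical
  induction F using Finset.induction_on with
  | empty =>
    exfalso
    have := hev.exists
    simp at this
  | @insert a F ha ih =>
    have hev' : ∀ᶠ i in (φ : Filter ι), Q a i ∨ ∃ p ∈ F, Q p i := by
      refine hev.mono fun i hi => ?_
      obtain ⟨p, hp, hq⟩ := hi
      rcases Finset.mem_insert.mp hp with rfl | hp
      · exact Or.inl hq
      · exact Or.inr ⟨p, hp, hq⟩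
    rcases (Ultrafilter.eventually_or).mp hev' with h1 | h2
    · exact ⟨a, Finset.mem_insert_self a F, h1⟩
    · obtain ⟨p, hp, hq⟩ := ih h2
      exact ⟨p, Finset.mem_insert_of_mem hp, hq⟩

theorem condW_closed_under_ultraproducts (S : Type u) [Monoid S]
    (h : ∀ s t : S, interIdeal S s t = ∅ ∨ FGideal S (interIdeal S s t)) :
    ∀ (ι : Type v) (φ : Ultrafilter ι) (B : ι → Type w) [∀ i, MulAction S (B i)],
      (∀ i, CondW S (B i)) → CondW S ((↑φ : Filter ι).Product B) := by
  intro ι φ B _ hW s t a b hab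
  classical
  induction a using Quotient.inductionOn' with | h f =>
  induction b using Quotient.inductionOn' with | h g =>
  have hset : ∀ᶠ i in (φ : Filter ι), s • f i = t • g i := Quotient.exact' hab
  -- for each such i, pick witnesses from Condition (W) in B i
  have hdata : ∀ i, s • f i = t • g i →
      ∃ (c : B i) (u : S), u ∈ interIdeal S s t ∧ s • f i = u • c := by
    intro i hi
    obtain ⟨c, u, hu, hc⟩ := hW i s t (f i) (g i) hi
    exact ⟨c, u, hu, hc⟩
  -- interIdeal S s t is nonempty
  obtain ⟨i0, hi0⟩ := hset.exists
  obtain ⟨c0, u0, hu0, _⟩ := hdata i0 hi0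
  have hFG : FGideal S (interIdeal S s t) := by
    refine (h s t).resolve_left fun he => ?_
    rw [he] at hu0; exact hu0
  obtain ⟨F, hFsub, hgen⟩ := hFG
  -- uniformize the generator
  have hev : ∀ᶠ i in (φ : Filter ι), ∃ p ∈ F,
      ∃ c : B i, ∃ w : S, s • f i = p • (w • c) := by
    refine hset.mono fun i hi => ?_
    obtain ⟨c, u, hu, hc⟩ := hdata i hi
    obtain ⟨p, hp, w, hw⟩ := hgen u hu
    refine ⟨p, hp, c, w, ?_⟩
    rw [hc, hw, mul_smul]
  obtain ⟨p, hp, heq⟩ := ultra_finset_choice φ F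
    (fun p i => ∃ c : B i, ∃ w : S, s • f i = p • (w • c)) hev
  -- build the witness function
  refine ⟨Quotient.mk'' (fun i =>
    if hi : ∃ c : B i, ∃ w : S, s • f i = p • (w • c) then hi.choose_spec.choose • hi.choose
    else f i), p, hFsub hp, ?_⟩
  apply Quotient.sound'
  refine heq.mono fun i hi => ?_
  dsimp only
  rw [dif_pos hi]
  exact hi.choose_spec.choose_spec
end

section
/- Let S be a monoid and suppose that for every t ∈ S, the set R(t,t) is either empty or finitely generated as a right S-subact of S × S. Then the class of left S-acts satisfying Condition (PWP) is closed under ultraproducts: for every set ι, every ultrafilter φ on ι and every family (B_i)_{i∈ι} of left S-acts each satisfying Condition (PWP), the ultraproduct of the family (B_i) with respect to φ satisfies Condition (PWP). -/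
universe u v w

open Filter

/-- Condition (PWP) for a left `S`-act `A`. -/
def CondPWP (S : Type*) [Monoid S] (A : Type*) [MulAction S A] : Prop :=
  ∀ (t : S) (a b : A), t • a = t • b →
    ∃ (c : A) (u v : S), a = u • c ∧ b = v • c ∧ t * u = t * v

/-- A subset of `S × S` is finitely generated as a right `S`-subact. -/
def FGpair (S : Type*) [Monoid S] (R : Set (S × S)) : Prop :=
  ∃ F : Finset (S × S), ↑F ⊆ R ∧
    ∀ p ∈ R, ∃ q ∈ F, ∃ w : S, p = (q.1 * w, q.2 * w)

theorem condPWP_closed_under_ultraproducts (S : Type u) [Monoid S]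
    (h : ∀ t : S, Rset S t t = ∅ ∨ FGpair S (Rset S t t)) :
    ∀ (ι : Type v) (φ : Ultrafilter ι) (B : ι → Type w) [∀ i, MulAction S (B i)],
      (∀ i, CondPWP S (B i)) → CondPWP S ((↑φ : Filter ι).Product B) := by
  classical
  intro ι φ B _ hB t a b hab
  induction a using Quotient.inductionOn' with | h f => ?_
  induction b using Quotient.inductionOn' with | h g => ?_
  have hT : ∀ᶠ i in (φ : Filter ι), t • f i = t • g i := Quotient.exact' hab
  set T : Set ι := {i | t • f i = t • g i} with hTdef
  -- choice of PWP data on T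
  have hdata : ∀ i, ∃ c : B i, ∃ u v : S,
      (i ∈ T → f i = u • c ∧ g i = v • c ∧ t * u = t * v) := by
    intro i
    by_cases hi : i ∈ T
    · obtain ⟨c, u, v, h1, h2, h3⟩ := hB i t (f i) (g i) hi
      exact ⟨c, u, v, fun _ => ⟨h1, h2, h3⟩⟩
    · exact ⟨f i, 1, 1, fun hi' => absurd hi' hi⟩
  choose c u v hc using hdata
  -- R(t,t) is nonempty
  have hTmem : T ∈ φ := hT
  obtain ⟨i0, hi0⟩ := Filter.nonempty_of_mem (f := (φ : Filter ι)) hTmem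
  have hR0 : (u i0, v i0) ∈ Rset S t t := (hc i0 hi0).2.2
  have hFG : FGpair S (Rset S t t) := by
    rcases h t with h' | h'
    · rw [h'] at hR0; exact absurd hR0 (Set.notMem_empty _)
    · exact h'
  obtain ⟨F, hFsub, hFgen⟩ := hFG
  -- choose generators for each i
  have hgen : ∀ i, ∃ q ∈ F, ∃ w : S,
      (i ∈ T → u i = q.1 * w ∧ v i = q.2 * w) := by
    intro i
    by_cases hi : i ∈ T
    · obtain ⟨q, hq, w, hw⟩ := hFgen (u i, v i) (hc i hi).2.2
      exact ⟨q, hq, w, fun _ => ⟨congrArg Prod.fst hw, congrArg Prod.snd hw⟩⟩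
    · obtain ⟨q, hq, w, _⟩ := hFgen (u i0, v i0) hR0
      exact ⟨q, hq, 1, fun hi' => absurd hi' hi⟩
  choose q hqF w hw using hgen
  -- some generator is used almost everywhere
  have hunion : (⋃ p ∈ (F : Set (S × S)), {i | i ∈ T ∧ q i = p}) ∈ φ := by
    apply Filter.mem_of_superset hTmem
    intro i hi
    exact Set.mem_biUnion (hqF i) ⟨hi, rfl⟩
  obtain ⟨p, hpF, hp⟩ := (Ultrafilter.finite_biUnion_mem_iff F.finite_toSet).mp hunion
  refine ⟨@Quotient.mk' _ (Filter.productSetoid _ B) (fun i => w i • c i), p.1, p.2, ?_, ?_, hFsub hpF⟩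
  · apply Quotient.sound'
    filter_upwards [hp] with i ⟨hiT, hiq⟩
    have h1 := (hc i hiT).1
    have h2 := (hw i hiT).1
    rw [h1, h2, hiq, mul_smul]
  · apply Quotient.sound'
    filter_upwards [hp] with i ⟨hiT, hiq⟩
    have h1 := (hc i hiT).2.1
    have h2 := (hw i hiT).2
    rw [h1, h2, hiq, mul_smul]
end
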